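/- (Main theorem) Let r, k ≥ 1 and let α₁,…,α_r be reals with 1,α₁,…,α_r linearly independent over ℚ, with best-approximation sequence m_ν, quantities ζ_ν, M_ν. Define m_ν* = (m_{0,ν},…,m_{r,ν},0,…,0) ∈ ℤ^{r+k+1} (appending k zeros). Suppose Σ_ν M_{ν+1}^{r+k}(log M_{ν+1})^{δ_k} ζ_ν < ∞, where δ₁ = 1 and δ_k = 0 for k ≥ 2. Then for almost all (β₁,…,β_k) ∈ ℝ^k, the sequence of best approximations to the (r+k)-tuple (α₁,…,α_r,β₁,…,β_k) differs from the sequence (m_ν*) by at most finitely many points; that is, there exist indices ν₀ and μ₀ such that the best approximations of the extended tuple with index ≥ μ₀ are exactly the points m_ν* with ν ≥ ν₀ in order. -/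

import Mathlib

open Finset MeasureTheory

/-- The value of the linear form: `ζ(m) = m₀ + Σ mⱼ αⱼ`. -/
def zetaF {r : ℕ} (α : Fin r → ℝ) (m₀ : ℤ) (m : Fin r → ℤ) : ℝ :=
  (m₀ : ℝ) + ∑ j, (m j : ℝ) * α j

/-- `M(m) = max_{1 ≤ j ≤ r} |m_j|` (as a natural number). -/
def Mnorm {r : ℕ} (m : Fin r → ℤ) : ℕ :=
  Finset.univ.sup fun j => (m j).natAbs

/-- `m = (m₀, m₁, …, m_r)` is a best approximation (in the sense of linear form)
for `α₁, …, α_r`. -/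
def IsBestApprox {r : ℕ} (α : Fin r → ℝ) (m₀ : ℤ) (m : Fin r → ℤ) : Prop :=
  m ≠ 0 ∧ 0 < zetaF α m₀ m ∧
    ∀ (n₀ : ℤ) (n : Fin r → ℤ), n ≠ 0 → Mnorm n ≤ Mnorm m →
      zetaF α m₀ m ≤ |zetaF α n₀ n|

/-- `(mz ν, m ν)` is the sequence of all best approximations, ordered by
strictly increasing `M_ν`. -/
def IsBASeq {r : ℕ} (α : Fin r → ℝ) (mz : ℕ → ℤ) (m : ℕ → Fin r → ℤ) : Prop :=
  (∀ ν, IsBestApprox α (mz ν) (m ν)) ∧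
  StrictMono (fun ν => Mnorm (m ν)) ∧
  ∀ (p₀ : ℤ) (p : Fin r → ℤ), IsBestApprox α p₀ p → ∃ ν, p₀ = mz ν ∧ p = m ν

/-- `1, α₁, …, α_r` are linearly independent over `ℚ`. -/
def LinIndepWithOne {r : ℕ} (α : Fin r → ℝ) : Prop :=
  LinearIndependent ℚ (Fin.cons (1 : ℝ) α : Fin (r + 1) → ℝ)

/-- `(α₁, …, α_r)` is a `ψ`-singular tuple (in the sense of linear form). -/
def IsPsiSingular {r : ℕ} (α : Fin r → ℝ) (ψ : ℝ → ℝ) : Prop :=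
  ∀ T : ℝ, 1 < T → ∃ n : Fin r → ℤ, n ≠ 0 ∧ (∀ j, (|n j| : ℝ) ≤ T) ∧
    ∃ n₀ : ℤ, |zetaF α n₀ n| < ψ T

/-!
Call `β` bad at level `ν` if some integer point `q` with nonzero `β`-component and height
`Mnorm q ≤ M_{ν+1}` has `|ζ(q)| ≤ ζ_ν` for the extended tuple. If `β` is bad at only finitely
many levels, then from some `N` on the points `m_ν*` are best approximations of `(α, β)`, and every
best approximation of height at least `M_N` has zero `β`-component, hence is some `m_ν*`; so the two
sequences agree up to a shift of indices. Inside a box `‖β‖ ≤ R`, each of the `O(M_{ν+1}^{r+k})`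
candidate points `q` cuts out a union of slabs of measure `O(ζ_ν)`, so the summability hypothesis
and Borel–Cantelli show that almost every `β` is bad at only finitely many levels.
-/

section Append

variable {r k : ℕ}

lemma natAbs_le_Mnorm (q : Fin r → ℤ) (j : Fin r) : (q j).natAbs ≤ Mnorm q :=
  Finset.le_sup (f := fun j => (q j).natAbs) (Finset.mem_univ j)

lemma Mnorm_le_iff {q : Fin r → ℤ} {M : ℕ} : Mnorm q ≤ M ↔ ∀ j, (q j).natAbs ≤ M := by
  simp [Mnorm]

lemma Mnorm_pos {q : Fin r → ℤ} (hq : q ≠ 0) : 0 < Mnorm q := by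
  obtain ⟨j, hj⟩ := Function.ne_iff.1 hq
  exact (Int.natAbs_pos.2 hj).trans_le (natAbs_le_Mnorm q j)

lemma Mnorm_append (a : Fin r → ℤ) (b : Fin k → ℤ) :
    Mnorm (Fin.append a b) = max (Mnorm a) (Mnorm b) := by
  refine le_antisymm (Mnorm_le_iff.2 fun i => ?_)
    (max_le (Mnorm_le_iff.2 fun j => ?_) (Mnorm_le_iff.2 fun j => ?_))
  · cases i using Fin.addCases <;> simp [natAbs_le_Mnorm]
  · simpa using natAbs_le_Mnorm (Fin.append a b) (Fin.castAdd k j)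
  · simpa using natAbs_le_Mnorm (Fin.append a b) (Fin.natAdd r j)

@[simp]
lemma Mnorm_append_zero (a : Fin r → ℤ) : Mnorm (Fin.append a (0 : Fin k → ℤ)) = Mnorm a := by
  rw [Mnorm_append]; simp [Mnorm]

@[simp]
lemma append_zero_eq_zero_iff {a : Fin r → ℤ} : Fin.append a (0 : Fin k → ℤ) = 0 ↔ a = 0 := by
  refine ⟨fun h => funext fun j => by simpa using congrFun h (Fin.castAdd k j), fun h => ?_⟩
  subst h; funext i; cases i using Fin.addCases <;> simp

lemma eq_append_zero_of_comp_natAdd_eq_zero {q : Fin (r + k) → ℤ} (h : q ∘ Fin.natAdd r = 0) :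
    q = Fin.append (q ∘ Fin.castAdd k) 0 := by
  rw [← h]; exact Fin.append_castAdd_natAdd.symm

lemma zetaF_append (α : Fin r → ℝ) (β : Fin k → ℝ) (q₀ : ℤ) (q : Fin (r + k) → ℤ) :
    zetaF (Fin.append α β) q₀ q
      = zetaF α q₀ (q ∘ Fin.castAdd k) + ∑ j, (q (Fin.natAdd r j) : ℝ) * β j := by
  simp only [zetaF, Fin.sum_univ_add, Fin.append_left, Fin.append_right, Function.comp_apply]
  ring

@[simp]
lemma zetaF_append_zero (α : Fin r → ℝ) (β : Fin k → ℝ) (q₀ : ℤ) (a : Fin r → ℤ) :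
    zetaF (Fin.append α β) q₀ (Fin.append a 0) = zetaF α q₀ a := by
  simp [zetaF_append, Function.comp_def]

end Append

theorem exists_add_eq_add_of_strictMono {X α : Type*} [LinearOrder α] (key : X → α)
    {f g : ℕ → X} (hf : StrictMono (key ∘ f)) (hg : StrictMono (key ∘ g)) {N : ℕ}
    (hgf : ∀ ν, N ≤ ν → ∃ μ, f μ = g ν) (hfg : ∀ μ, key (g N) ≤ key (f μ) → ∃ ν, f μ = g ν) :
    ∃ μ₀, ∀ i, f (μ₀ + i) = g (N + i) := by
  obtain ⟨μ₀, hμ₀⟩ := hgf N le_rfl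
  refine ⟨μ₀, fun i => ?_⟩
  induction i with
  | zero => exact hμ₀
  | succ i ih =>
    have hstep : key (g (N + i)) < key (f (μ₀ + i + 1)) := ih ▸ hf (Nat.lt_succ_self _)
    obtain ⟨ν, hν⟩ := hfg _ ((hg.monotone (Nat.le_add_right N i)).trans hstep.le)
    obtain ⟨μ, hμ⟩ := hgf (N + i + 1) (by omega)
    have hν_gt : N + i < ν := hg.lt_iff_lt.1 (by simpa only [Function.comp_apply, ← hν])
    have hμ_gt : μ₀ + i < μ := hf.lt_iff_lt.1 <| by
      simp only [Function.comp_apply, ih, hμ]; exact hg (Nat.lt_succ_self _)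
    have hν_le : ν ≤ N + i + 1 := hg.le_iff_le.1 <| by
      simp only [Function.comp_apply, ← hν, ← hμ]; exact hf.monotone hμ_gt
    rw [← add_assoc, ← add_assoc, hν, show ν = N + i + 1 by omega]

lemma StrictMono.exists_le_lt_succ {f : ℕ → ℕ} (hf : StrictMono f) {N x : ℕ} (hx : f N ≤ x) :
    ∃ ν, N ≤ ν ∧ f ν ≤ x ∧ x < f (ν + 1) := by
  have hex : ∃ n, x < f n := ⟨x + 1, Nat.lt_succ_self x |>.trans_le hf.le_apply⟩
  have hN : N < Nat.find hex :=
    lt_of_not_ge fun h => (Nat.find_spec hex).not_ge (hx.trans' (hf.monotone h))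
  refine ⟨Nat.find hex - 1, by omega, not_lt.1 (Nat.find_min hex (by omega)), ?_⟩
  rw [Nat.sub_add_cancel (by omega)]
  exact Nat.find_spec hex

section BestApprox

variable {r k : ℕ} {α : Fin r → ℝ} {β : Fin k → ℝ}

lemma IsBestApprox.of_append_zero {p₀ : ℤ} {a : Fin r → ℤ}
    (h : IsBestApprox (Fin.append α β) p₀ (Fin.append a 0)) : IsBestApprox α p₀ a := by
  obtain ⟨hne, hpos, hmin⟩ := h
  refine ⟨by simpa using hne, by simpa using hpos, fun n₀ n hn hM => ?_⟩
  simpa using hmin n₀ (Fin.append n 0) (by simpa using hn) (by simpa using hM)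

lemma IsBestApprox.append_zero {p₀ : ℤ} {a : Fin r → ℤ} (h : IsBestApprox α p₀ a)
    (hsep : ∀ (q₀ : ℤ) (q : Fin (r + k) → ℤ), q ∘ Fin.natAdd r ≠ 0 → Mnorm q ≤ Mnorm a →
      zetaF α p₀ a ≤ |zetaF (Fin.append α β) q₀ q|) :
    IsBestApprox (Fin.append α β) p₀ (Fin.append a 0) := by
  obtain ⟨hne, hpos, hmin⟩ := h
  refine ⟨by simpa using hne, by simpa using hpos, fun q₀ q hq hM => ?_⟩
  rw [Mnorm_append_zero] at hM
  rw [zetaF_append_zero]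
  by_cases hb : q ∘ Fin.natAdd r = 0
  · rw [eq_append_zero_of_comp_natAdd_eq_zero hb] at hq hM ⊢
    simpa using hmin q₀ _ (by simpa using hq) (by simpa using hM)
  · exact hsep q₀ q hb hM

end BestApprox

namespace IsBASeq

variable {r k : ℕ} {α : Fin r → ℝ} {mz : ℕ → ℤ} {m : ℕ → Fin r → ℤ}

lemma zetaF_pos (h : IsBASeq α mz m) (ν : ℕ) : 0 < zetaF α (mz ν) (m ν) := (h.1 ν).2.1

lemma zetaF_antitone (h : IsBASeq α mz m) : Antitone fun ν => zetaF α (mz ν) (m ν) :=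
  antitone_nat_of_succ_le fun ν => by
    simpa [abs_of_pos (h.zetaF_pos ν)] using
      (h.1 (ν + 1)).2.2 (mz ν) (m ν) (h.1 ν).1 (h.2.1 (Nat.lt_succ_self ν)).le

lemma two_le_Mnorm_succ (h : IsBASeq α mz m) (ν : ℕ) : 2 ≤ Mnorm (m (ν + 1)) := by
  have h₀ := Mnorm_pos (h.1 0).1
  have h₁ : Mnorm (m 0) < Mnorm (m (ν + 1)) := h.2.1 (Nat.succ_pos ν)
  omega

variable {β : Fin k → ℝ} {N : ℕ}

lemma exists_eq_of_isBestApprox_append (h : IsBASeq α mz m)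
    (hsep : ∀ ν, N ≤ ν → ∀ (q₀ : ℤ) (q : Fin (r + k) → ℤ), q ∘ Fin.natAdd r ≠ 0 →
      Mnorm q ≤ Mnorm (m (ν + 1)) → zetaF α (mz ν) (m ν) < |zetaF (Fin.append α β) q₀ q|)
    {p₀ : ℤ} {p : Fin (r + k) → ℤ} (hp : IsBestApprox (Fin.append α β) p₀ p)
    (hpN : Mnorm (m N) ≤ Mnorm p) : ∃ ν, p₀ = mz ν ∧ p = Fin.append (m ν) 0 := by
  obtain ⟨ν, hNν, hle, hlt⟩ := h.2.1.exists_le_lt_succ hpN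
  have hb : p ∘ Fin.natAdd r = 0 := by
    by_contra hb
    have h₁ := hsep ν hNν p₀ p hb hlt.le
    have h₂ := hp.2.2 (mz ν) (Fin.append (m ν) 0) (by simpa using (h.1 ν).1) (by simpa using hle)
    rw [zetaF_append_zero, abs_of_pos (h.zetaF_pos ν)] at h₂
    rw [abs_of_pos hp.2.1] at h₁
    linarith
  rw [eq_append_zero_of_comp_natAdd_eq_zero hb] at hp ⊢
  obtain ⟨ν', rfl, ha⟩ := h.2.2 _ _ hp.of_append_zero
  exact ⟨ν', rfl, by rw [ha]⟩

theorem eventually_eq_append_zero (h : IsBASeq α mz m)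
    (hsep : ∀ ν, N ≤ ν → ∀ (q₀ : ℤ) (q : Fin (r + k) → ℤ), q ∘ Fin.natAdd r ≠ 0 →
      Mnorm q ≤ Mnorm (m (ν + 1)) → zetaF α (mz ν) (m ν) < |zetaF (Fin.append α β) q₀ q|)
    {nz : ℕ → ℤ} {n : ℕ → Fin (r + k) → ℤ} (hn : IsBASeq (Fin.append α β) nz n) :
    ∃ μ₀, ∀ i, nz (μ₀ + i) = mz (N + i) ∧ n (μ₀ + i) = Fin.append (m (N + i)) 0 := by
  have hgf : ∀ ν, N ≤ ν → ∃ μ, (nz μ, n μ) = (mz ν, Fin.append (m ν) 0) := by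
    intro ν hν
    refine (hn.2.2 _ _ ((h.1 ν).append_zero fun q₀ q hq hM => (hsep ν hν q₀ q hq ?_).le)).imp
      fun μ hμ => by rw [hμ.1, hμ.2]
    exact hM.trans (h.2.1 (Nat.lt_succ_self ν)).le
  obtain ⟨μ₀, hμ₀⟩ := exists_add_eq_add_of_strictMono
    (fun x : ℤ × (Fin (r + k) → ℤ) => Mnorm x.2) (f := fun μ => (nz μ, n μ)) hn.2.1
    (by simpa [Function.comp_def] using h.2.1) hgf
    (fun μ hμ => (h.exists_eq_of_isBestApprox_append hsep (hn.1 μ) (by simpa using hμ)).imp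
      fun ν hν => by rw [hν.1, hν.2])
  exact ⟨μ₀, fun i => Prod.ext_iff.1 (hμ₀ i)⟩

end IsBASeq

lemma volume_abs_le_inter_near_int_le {R ζ t : ℝ} (d : ℝ) (hR : 0 ≤ R) (hζ : 0 ≤ ζ)
    (ht : 1 ≤ |t|) :
    volume {x : ℝ | |x| ≤ R ∧ ∃ n : ℤ, |n + d + t * x| ≤ ζ}
      ≤ ENNReal.ofReal (2 * ζ * (2 * R + 2 * ζ + 1)) := by
  have ht₀ : 0 < |t| := one_pos.trans_le ht
  set L : ℤ := ⌈-d - |t| * R - ζ⌉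
  set U : ℤ := ⌊-d + |t| * R + ζ⌋
  have hsub : {x : ℝ | |x| ≤ R ∧ ∃ n : ℤ, |n + d + t * x| ≤ ζ}
      ⊆ ⋃ n ∈ Finset.Icc L U, (t * ·) ⁻¹' Set.Icc (-n - d - ζ) (-n - d + ζ) := by
    rintro x ⟨hx, n, hn⟩
    have htx : |t * x| ≤ |t| * R := by rw [abs_mul]; gcongr
    obtain ⟨h₁, h₂⟩ := abs_le.1 hn
    obtain ⟨h₃, h₄⟩ := abs_le.1 htx
    simp only [Set.mem_iUnion, Set.mem_preimage, Set.mem_Icc, Finset.mem_Icc, exists_prop]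
    refine ⟨n, ⟨Int.ceil_le.2 ?_, Int.le_floor.2 ?_⟩, ?_, ?_⟩ <;> linarith
  have hcard : ((Finset.Icc L U).card : ℝ) ≤ 2 * |t| * R + 2 * ζ + 1 := by
    have hU : (U : ℝ) ≤ -d + |t| * R + ζ := Int.floor_le _
    have hL : -d - |t| * R - ζ ≤ (L : ℝ) := Int.le_ceil _
    rw [Int.card_Icc]
    rcases le_or_gt (U + 1 - L) 0 with h | h
    · rw [Int.toNat_of_nonpos h]; push_cast; positivity
    · rw [← Int.cast_natCast, Int.toNat_of_nonneg h.le]; push_cast; linarith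
  calc volume {x : ℝ | |x| ≤ R ∧ ∃ n : ℤ, |n + d + t * x| ≤ ζ}
      ≤ ∑ n ∈ Finset.Icc L U, volume ((t * ·) ⁻¹' Set.Icc (-n - d - ζ) (-n - d + ζ)) :=
        (measure_mono hsub).trans (measure_biUnion_finset_le _ _)
    _ = ∑ n ∈ Finset.Icc L U, ENNReal.ofReal (2 * ζ / |t|) := by
        refine Finset.sum_congr rfl fun n _ => ?_
        rw [Real.volume_preimage_mul_left (abs_pos.1 ht₀), Real.volume_Icc, abs_inv,
          ← ENNReal.ofReal_mul (by positivity)]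
        congr 1; ring
    _ = ENNReal.ofReal ((Finset.Icc L U).card * (2 * ζ / |t|)) := by
        rw [Finset.sum_const, nsmul_eq_mul, ENNReal.ofReal_mul (by positivity),
          ENNReal.ofReal_natCast]
    _ ≤ ENNReal.ofReal (2 * ζ * (2 * R + 2 * ζ + 1)) := by
        refine ENNReal.ofReal_le_ofReal ?_
        have h : 2 * ζ / |t| ≤ 2 * ζ := div_le_self (by positivity) ht
        calc (Finset.Icc L U).card * (2 * ζ / |t|)
            ≤ (2 * |t| * R + 2 * ζ + 1) * (2 * ζ / |t|) := by gcongr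
          _ = 4 * ζ * R + (2 * ζ + 1) * (2 * ζ / |t|) := by field_simp; ring
          _ ≤ 2 * ζ * (2 * R + 2 * ζ + 1) := by nlinarith

lemma volume_closedBall_inter_near_int_le {k : ℕ} {R ζ : ℝ} (c : ℝ) (hR : 0 ≤ R) (hζ : 0 ≤ ζ)
    {b : Fin (k + 1) → ℤ} (hb : b ≠ 0) :
    volume {β : Fin (k + 1) → ℝ | ‖β‖ ≤ R ∧ ∃ n : ℤ, |n + c + ∑ j, b j * β j| ≤ ζ}
      ≤ ENNReal.ofReal (2 * ζ * (2 * R + 2 * ζ + 1) * (2 * R) ^ k) := by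
  -- Fubini along a coordinate `i` with `b i ≠ 0`: each slice is a set as in the previous lemma.
  obtain ⟨i, hi⟩ := Function.ne_iff.1 hb
  set A := {β : Fin (k + 1) → ℝ | ‖β‖ ≤ R ∧ ∃ n : ℤ, |n + c + ∑ j, b j * β j| ≤ ζ}
  have hA : MeasurableSet A := by
    simp only [A, Set.ofPred_and, Set.ofPred_exists]
    exact (measurableSet_le (by fun_prop) measurable_const).inter
      (.iUnion fun n => measurableSet_le (by fun_prop) measurable_const)
  set e := MeasurableEquiv.piFinSuccAbove (fun _ : Fin (k + 1) => ℝ) i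
  have he : ∀ x y, e.symm (x, y) = Fin.insertNth (α := fun _ => ℝ) i x y := fun x y => by
    simp [e, MeasurableEquiv.piFinSuccAbove_symm_apply, Fin.insertNthEquiv]
  have hslice : ∀ y, volume ((fun x => (x, y)) ⁻¹' (e.symm ⁻¹' A)) ≤
      (Metric.closedBall 0 R).indicator
        (fun _ => ENNReal.ofReal (2 * ζ * (2 * R + 2 * ζ + 1))) y := by
    intro y
    by_cases hy : ‖y‖ ≤ R
    · rw [Set.indicator_of_mem (mem_closedBall_zero_iff.2 hy)]
      refine (measure_mono fun x hx => ?_).trans (volume_abs_le_inter_near_int_le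
        (c + ∑ j, b (i.succAbove j) * y j) hR hζ (t := b i) (by exact_mod_cast Int.one_le_abs hi))
      obtain ⟨hxR, n, hn⟩ : Fin.insertNth (α := fun _ => ℝ) i x y ∈ A := by rw [← he]; exact hx
      refine ⟨by simpa using (norm_le_pi_norm (Fin.insertNth (α := fun _ => ℝ) i x y) i).trans hxR,
        n, ?_⟩
      rw [Fin.sum_univ_succAbove _ i] at hn
      simp only [Fin.insertNth_apply_same, Fin.insertNth_apply_succAbove] at hn
      convert hn using 2; ring
    · rw [Set.indicator_of_notMem (by simpa using hy)]
      refine (measure_mono_null (fun x hx => hy ?_) measure_empty).le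
      obtain ⟨hxR, -⟩ : Fin.insertNth (α := fun _ => ℝ) i x y ∈ A := by rw [← he]; exact hx
      refine (pi_norm_le_iff_of_nonneg hR).2 fun j => ?_
      simpa using
        (norm_le_pi_norm (Fin.insertNth (α := fun _ => ℝ) i x y) (i.succAbove j)).trans hxR
  calc volume A = volume (e.symm ⁻¹' A) :=
        ((volume_preserving_piFinSuccAbove _ i).symm.measure_preimage hA.nullMeasurableSet).symm
    _ = ∫⁻ y, volume ((fun x => (x, y)) ⁻¹' (e.symm ⁻¹' A)) :=
        Measure.prod_apply_symm (hA.preimage e.symm.measurable)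
    _ ≤ ∫⁻ y, (Metric.closedBall 0 R).indicator
          (fun _ => ENNReal.ofReal (2 * ζ * (2 * R + 2 * ζ + 1))) y := lintegral_mono hslice
    _ = ENNReal.ofReal (2 * ζ * (2 * R + 2 * ζ + 1) * (2 * R) ^ k) := by
        rw [lintegral_indicator_const Metric.isClosed_closedBall.measurableSet,
          Real.volume_pi_closedBall _ hR, Fintype.card_fin, ← ENNReal.ofReal_mul (by positivity)]

def badSet {r k : ℕ} (α : Fin r → ℝ) (R : ℝ) (M : ℕ) (ζ : ℝ) : Set (Fin k → ℝ) :=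
  {β | ‖β‖ ≤ R ∧ ∃ (q₀ : ℤ) (q : Fin (r + k) → ℤ),
    q ∘ Fin.natAdd r ≠ 0 ∧ Mnorm q ≤ M ∧ |zetaF (Fin.append α β) q₀ q| ≤ ζ}

lemma volume_badSet_le {r k : ℕ} (α : Fin r → ℝ) {R ζ : ℝ} (hR : 0 ≤ R) (hζ : 0 ≤ ζ) (M : ℕ) :
    volume (badSet (k := k + 1) α R M ζ) ≤ ((2 * M + 1) ^ (r + (k + 1)) : ℕ) *
      ENNReal.ofReal (2 * ζ * (2 * R + 2 * ζ + 1) * (2 * R) ^ k) := by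
  set S := Fintype.piFinset fun _ : Fin (r + (k + 1)) => Finset.Icc (-(M : ℤ)) M
  set slab : (Fin (r + (k + 1)) → ℤ) → Set (Fin (k + 1) → ℝ) := fun q =>
    {β | ‖β‖ ≤ R ∧ q ∘ Fin.natAdd r ≠ 0 ∧ ∃ q₀ : ℤ, |zetaF (Fin.append α β) q₀ q| ≤ ζ}
  have hsub : badSet α R M ζ ⊆ ⋃ q ∈ S, slab q := by
    rintro β ⟨hβ, q₀, q, hq, hM, hζq⟩
    refine Set.mem_biUnion (Fintype.mem_piFinset.2 fun j => ?_) ⟨hβ, hq, q₀, hζq⟩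
    rw [Finset.mem_Icc, ← abs_le, Int.abs_eq_natAbs]
    exact_mod_cast Mnorm_le_iff.1 hM j
  have hslab : ∀ q,
      volume (slab q) ≤ ENNReal.ofReal (2 * ζ * (2 * R + 2 * ζ + 1) * (2 * R) ^ k) := by
    intro q
    by_cases hq : q ∘ Fin.natAdd r = 0
    · simp [slab, hq]
    refine (measure_mono fun β hβ => ?_).trans
      (volume_closedBall_inter_near_int_le (∑ j, (q (Fin.castAdd (k + 1) j) : ℝ) * α j) hR hζ hq)
    obtain ⟨hβR, -, q₀, h⟩ := hβ
    refine ⟨hβR, q₀, ?_⟩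
    rw [zetaF_append] at h
    convert h using 2
    simp [zetaF, add_assoc]
  have hcard : S.card = (2 * M + 1) ^ (r + (k + 1)) := by
    rw [Fintype.card_piFinset, Finset.prod_const, Int.card_Icc, Finset.card_univ, Fintype.card_fin]
    congr 1; omega
  calc volume (badSet α R M ζ) ≤ ∑ q ∈ S, volume (slab q) :=
        (measure_mono hsub).trans (measure_biUnion_finset_le _ _)
    _ ≤ ∑ q ∈ S, ENNReal.ofReal (2 * ζ * (2 * R + 2 * ζ + 1) * (2 * R) ^ k) :=
        Finset.sum_le_sum fun q _ => hslab q
    _ = _ := by rw [Finset.sum_const, nsmul_eq_mul, hcard]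

theorem ae_eventually_notMem_badSet {r k : ℕ} (α : Fin r → ℝ) {M : ℕ → ℕ} {ζ : ℕ → ℝ} {ζ₀ : ℝ}
    (hM : ∀ ν, 1 ≤ M ν) (hζ : ∀ ν, 0 ≤ ζ ν) (hζ₀ : ∀ ν, ζ ν ≤ ζ₀)
    (hs : Summable fun ν => (M ν : ℝ) ^ (r + (k + 1)) * ζ ν) :
    ∀ᵐ β : Fin (k + 1) → ℝ, ∀ R : ℕ, ∀ᶠ ν in Filter.atTop, β ∉ badSet α R (M ν) (ζ ν) := by
  refine ae_all_iff.2 fun R => ae_eventually_notMem ?_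
  have hζ₀' : 0 ≤ ζ₀ := (hζ 0).trans (hζ₀ 0)
  set C : ℝ := 3 ^ (r + (k + 1)) * (2 * (2 * R + 2 * ζ₀ + 1) * (2 * R) ^ k)
  have hbound : ∀ ν, volume (badSet (k := k + 1) α R (M ν) (ζ ν))
      ≤ ENNReal.ofReal (C * ((M ν : ℝ) ^ (r + (k + 1)) * ζ ν)) := by
    intro ν
    refine (volume_badSet_le α R.cast_nonneg (hζ ν) (M ν)).trans ?_
    rw [← ENNReal.ofReal_natCast, ← ENNReal.ofReal_mul (by positivity)]
    refine ENNReal.ofReal_le_ofReal ?_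
    have hM' : (1 : ℝ) ≤ M ν := by exact_mod_cast hM ν
    have hζν := hζ ν
    calc ((((2 * M ν + 1) ^ (r + (k + 1)) : ℕ) : ℝ)
          * (2 * ζ ν * (2 * R + 2 * ζ ν + 1) * (2 * R) ^ k))
        ≤ (3 * M ν) ^ (r + (k + 1)) * (2 * ζ ν * (2 * R + 2 * ζ₀ + 1) * (2 * R) ^ k) := by
          push_cast
          gcongr
          · linarith
          · exact hζ₀ ν
      _ = C * ((M ν : ℝ) ^ (r + (k + 1)) * ζ ν) := by ring
  refine ne_top_of_le_ne_top ENNReal.ofReal_ne_top ((ENNReal.tsum_le_tsum hbound).trans_eq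
    (ENNReal.ofReal_tsum_of_nonneg (fun ν => ?_) (hs.mul_left C)).symm)
  have := hζ ν
  positivity

lemma summable_of_summable_mul_ite_log {p : ℕ} {M : ℕ → ℕ} {z : ℕ → ℝ} (P : Prop) [Decidable P]
    (hM : ∀ ν, 2 ≤ M ν) (hz : ∀ ν, 0 ≤ z ν)
    (h : Summable fun ν => (M ν : ℝ) ^ p * (if P then Real.log (M ν) else 1) * z ν) :
    Summable fun ν => (M ν : ℝ) ^ p * z ν := by
  refine (h.mul_left (Real.log 2)⁻¹).of_nonneg_of_le (fun ν => by have := hz ν; positivity)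
    fun ν => ?_
  have hlog : Real.log 2 ≤ if P then Real.log (M ν) else 1 := by
    split_ifs
    · exact Real.log_le_log two_pos (by exact_mod_cast hM ν)
    · exact Real.log_two_lt_d9.le.trans (by norm_num)
  rw [inv_mul_eq_div, le_div_iff₀ (Real.log_pos one_lt_two)]
  calc (M ν : ℝ) ^ p * z ν * Real.log 2 = (M ν : ℝ) ^ p * Real.log 2 * z ν := by ring
    _ ≤ _ := by have := hz ν; gcongr

theorem stmt9_general (r k : ℕ) (hk : 1 ≤ k) (α : Fin r → ℝ)
    (mz : ℕ → ℤ) (m : ℕ → Fin r → ℤ) (hBA : IsBASeq α mz m)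
    (hsum : Summable fun ν => (Mnorm (m (ν + 1)) : ℝ) ^ (r + k) *
      (if k = 1 then Real.log (Mnorm (m (ν + 1))) else 1) * zetaF α (mz ν) (m ν)) :
    ∀ᵐ β : Fin k → ℝ,
      ∀ (nz : ℕ → ℤ) (n : ℕ → Fin (r + k) → ℤ),
        IsBASeq (Fin.append α β) nz n →
        ∃ ν₀ μ₀ : ℕ, ∀ i : ℕ,
          nz (μ₀ + i) = mz (ν₀ + i) ∧
          n (μ₀ + i) = Fin.append (m (ν₀ + i)) (0 : Fin k → ℤ) := by
  obtain ⟨k, rfl⟩ : ∃ k', k = k' + 1 := ⟨k - 1, by omega⟩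
  have hζ : ∀ ν, 0 ≤ zetaF α (mz ν) (m ν) := fun ν => (hBA.zetaF_pos ν).le
  have hsumm := summable_of_summable_mul_ite_log _ hBA.two_le_Mnorm_succ hζ hsum
  filter_upwards [ae_eventually_notMem_badSet α
    (fun ν => one_le_two.trans (hBA.two_le_Mnorm_succ ν)) hζ
    (fun ν => hBA.zetaF_antitone (Nat.zero_le ν)) hsumm] with β hβ nz n hn
  obtain ⟨R, hR⟩ := exists_nat_ge ‖β‖
  obtain ⟨N, hN⟩ := (hβ R).exists_forall_of_atTop
  obtain ⟨μ₀, hμ₀⟩ := hBA.eventually_eq_append_zero (N := N)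
    (fun ν hν q₀ q hq hM => lt_of_not_ge fun hle => hN ν hν ⟨hR, q₀, q, hq, hM, hle⟩) hn
  exact ⟨N, μ₀, hμ₀⟩

/-- main theorem. If `Σ M_{ν+1}^{r+k}(log M_{ν+1})^{δ_k} ζ_ν < ∞`, then for
almost all `β ∈ ℝ^k` the best approximation sequence of `(α, β)` eventually coincides, in
order, with the sequence `m_ν* = (m_ν, 0, …, 0)`. -/
theorem stmt9 (r k : ℕ) (hr : 1 ≤ r) (hk : 1 ≤ k) (α : Fin r → ℝ) (hα : LinIndepWithOne α)
    (mz : ℕ → ℤ) (m : ℕ → Fin r → ℤ) (hBA : IsBASeq α mz m)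
    (hsum : Summable fun ν => (Mnorm (m (ν + 1)) : ℝ) ^ (r + k) *
      (if k = 1 then Real.log (Mnorm (m (ν + 1))) else 1) * zetaF α (mz ν) (m ν)) :
    ∀ᵐ β : Fin k → ℝ,
      ∀ (nz : ℕ → ℤ) (n : ℕ → Fin (r + k) → ℤ),
        IsBASeq (Fin.append α β) nz n →
        ∃ ν₀ μ₀ : ℕ, ∀ i : ℕ,
          nz (μ₀ + i) = mz (ν₀ + i) ∧
          n (μ₀ + i) = Fin.append (m (ν₀ + i)) (0 : Fin k → ℤ) :=
  stmt9_general r k hk α mz m hBA hsum
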